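/- arXiv:math/9411228 — 2 statements merged into one kernel-verified Lean document; each statement's English description precedes it below -/
import Mathlib

section
/- Let μ, ν, p, β be real numbers with μ > −1, ν > μ + 1, and p > 0. Then ∫₀^∞ t^μ e^{−β t/(t+p)²} (t+p)^{−ν} dt = (Γ(μ+1) Γ(ν−μ−1) / (p^{ν−μ−1} Γ(ν))) · ₂F₂(μ+1, ν−μ−1; ν/2, (ν+1)/2; −β/(4p)). -/
open MeasureTheory Set

/-- Pochhammer symbol `(c)_n = c(c+1)⋯(c+n−1)` for a real `c`. -/
noncomputable def poch (c : ℝ) (n : ℕ) : ℝ := ∏ i ∈ Finset.range n, (c + i)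

/-- The generalized hypergeometric series `₂F₂(a₁,a₂;b₁,b₂;z)`. -/
noncomputable def hyp2F2 (a₁ a₂ b₁ b₂ z : ℝ) : ℝ :=
  ∑' n : ℕ, poch a₁ n * poch a₂ n / (poch b₁ n * poch b₂ n) * z ^ n / n.factorial

/-!
Expand `exp (-β t / (t + p)²)` in its power series. Since `(t + p)² ≥ 4 p t`, the exponent is
bounded by `|β| / (4 p)` on `t > 0`, so the series may be integrated term by term against the
integrable weight `t ^ μ (t + p) ^ (-ν)`. The `n`-th term is `(-β)ⁿ / n!` times the integral of
`t ^ (μ + n) (t + p) ^ (-(ν + 2n))`, which the substitution `t = p u / (1 - u)` turns into a Beta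
integral. Writing its Gamma values through Pochhammer symbols, with the duplication
`(ν)_{2n} = 4ⁿ (ν/2)_n ((ν+1)/2)_n` in the denominator, yields the `₂F₂` coefficients.
-/

noncomputable def hyp2F2Term (a₁ a₂ b₁ b₂ z : ℝ) (n : ℕ) : ℝ :=
  poch a₁ n * poch a₂ n / (poch b₁ n * poch b₂ n) * z ^ n / n.factorial

lemma hyp2F2_eq_tsum (a₁ a₂ b₁ b₂ z : ℝ) :
    hyp2F2 a₁ a₂ b₁ b₂ z = ∑' n, hyp2F2Term a₁ a₂ b₁ b₂ z n :=
  rfl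

lemma poch_succ (c : ℝ) (n : ℕ) : poch c (n + 1) = poch c n * (c + n) :=
  Finset.prod_range_succ _ n

lemma poch_pos {c : ℝ} (hc : 0 < c) (n : ℕ) : 0 < poch c n :=
  Finset.prod_pos fun i _ ↦ by positivity

lemma Gamma_add_nat_eq_mul_poch {c : ℝ} (hc : 0 < c) (n : ℕ) :
    Real.Gamma (c + n) = Real.Gamma c * poch c n := by
  induction n with
  | zero => simp [poch]
  | succ n ih =>
    rw [Nat.cast_succ, ← add_assoc, Real.Gamma_add_one (by positivity), ih, poch_succ]
    ring

lemma poch_two_mul (c : ℝ) (n : ℕ) :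
    poch c (2 * n) = 4 ^ n * poch (c / 2) n * poch ((c + 1) / 2) n := by
  induction n with
  | zero => simp [poch]
  | succ n ih =>
    rw [show 2 * (n + 1) = 2 * n + 1 + 1 by ring, poch_succ, poch_succ, ih, poch_succ, poch_succ]
    push_cast
    ring

-- The exponents `a + 1 - 1` match the integrand of `Complex.betaIntegral (a + 1) (b + 1)`.
lemma ofReal_cpow_mul_one_sub_cpow {a b x : ℝ} (hx₀ : 0 < x) (hx₁ : x < 1) :
    (x : ℂ) ^ ((a : ℂ) + 1 - 1) * (1 - (x : ℂ)) ^ ((b : ℂ) + 1 - 1)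
      = ((x ^ a * (1 - x) ^ b : ℝ) : ℂ) := by
  rw [add_sub_cancel_right, add_sub_cancel_right, Complex.ofReal_mul,
    Complex.ofReal_cpow hx₀.le, Complex.ofReal_cpow (by linarith), Complex.ofReal_sub,
    Complex.ofReal_one]

lemma integrableOn_rpow_mul_one_sub_rpow {a b : ℝ} (ha : -1 < a) (hb : -1 < b) :
    IntegrableOn (fun x : ℝ ↦ x ^ a * (1 - x) ^ b) (Ioo 0 1) := by
  have h := Complex.betaIntegral_convergent (u := (a : ℂ) + 1) (v := (b : ℂ) + 1)
    (by simpa using by linarith) (by simpa using by linarith)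
  rw [intervalIntegrable_iff_integrableOn_Ioo_of_le zero_le_one] at h
  refine (integrableOn_congr_fun (fun x hx ↦ ?_) measurableSet_Ioo).mp h.re
  exact congrArg Complex.re (ofReal_cpow_mul_one_sub_cpow hx.1 hx.2)

lemma integral_rpow_mul_one_sub_rpow {a b : ℝ} (ha : -1 < a) (hb : -1 < b) :
    ∫ x in Ioo (0 : ℝ) 1, x ^ a * (1 - x) ^ b
      = Real.Gamma (a + 1) * Real.Gamma (b + 1) / Real.Gamma (a + b + 2) := by
  have key := Complex.Gamma_mul_Gamma_eq_betaIntegral (s := (a : ℂ) + 1) (t := (b : ℂ) + 1)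
    (by simpa using by linarith) (by simpa using by linarith)
  rw [Complex.betaIntegral, intervalIntegral.integral_of_le zero_le_one,
    ← Measure.restrict_congr_set Ioo_ae_eq_Ioc,
    setIntegral_congr_fun measurableSet_Ioo fun x hx ↦ ofReal_cpow_mul_one_sub_cpow hx.1 hx.2,
    integral_complex_ofReal, show (a : ℂ) + 1 + (b + 1) = ((a + b + 2 : ℝ) : ℂ) by push_cast; ring,
    show (a : ℂ) + 1 = ((a + 1 : ℝ) : ℂ) by push_cast; ring,
    show (b : ℂ) + 1 = ((b + 1 : ℝ) : ℂ) by push_cast; ring,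
    Complex.Gamma_ofReal, Complex.Gamma_ofReal, Complex.Gamma_ofReal] at key
  have hΓ : Real.Gamma (a + b + 2) ≠ 0 := (Real.Gamma_pos_of_pos (by linarith)).ne'
  rw [eq_div_iff hΓ, mul_comm]
  exact_mod_cast key.symm

lemma image_mul_div_one_sub_Ioo {p : ℝ} (hp : 0 < p) :
    (fun u : ℝ ↦ p * u / (1 - u)) '' Ioo 0 1 = Ioi 0 := by
  ext t
  constructor
  · rintro ⟨u, ⟨hu₀, hu₁⟩, rfl⟩
    exact div_pos (mul_pos hp hu₀) (sub_pos.2 hu₁)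
  · intro (ht : 0 < t)
    refine ⟨t / (t + p), ⟨by positivity, (div_lt_one (by positivity)).2 (by linarith)⟩, ?_⟩
    field_simp [hp.ne']
    ring

lemma injOn_mul_div_one_sub {p : ℝ} (hp : 0 < p) :
    InjOn (fun u : ℝ ↦ p * u / (1 - u)) (Ioo 0 1) := by
  intro u hu v hv h
  have hu₁ : 1 - u ≠ 0 := by linarith [hu.2]
  have hv₁ : 1 - v ≠ 0 := by linarith [hv.2]
  field_simp at h
  nlinarith

lemma hasDerivAt_mul_div_one_sub (p : ℝ) {u : ℝ} (hu : u ≠ 1) :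
    HasDerivAt (fun u : ℝ ↦ p * u / (1 - u)) (p / (1 - u) ^ 2) u := by
  refine (((hasDerivAt_id u).const_mul p).div ((hasDerivAt_id u).const_sub 1)
    (sub_ne_zero.2 hu.symm)).congr_deriv ?_
  simp only [id]
  ring

lemma abs_div_one_sub_sq_smul_rpow_mul_add_rpow_neg {p a c u : ℝ} (hp : 0 < p)
    (hu : u ∈ Ioo (0 : ℝ) 1) :
    |p / (1 - u) ^ 2| • ((p * u / (1 - u)) ^ a * (p * u / (1 - u) + p) ^ (-c))
      = p ^ (a + 1 - c) * (u ^ a * (1 - u) ^ (c - a - 2)) := by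
  obtain ⟨hu₀, hu₁⟩ := hu
  have h₁ : 0 < 1 - u := by linarith
  rw [smul_eq_mul, abs_of_pos (by positivity), show p * u / (1 - u) + p = p / (1 - u) by
    field_simp; ring, Real.div_rpow (by positivity) h₁.le, Real.div_rpow hp.le h₁.le,
    Real.mul_rpow hp.le hu₀.le, Real.rpow_neg hp.le, Real.rpow_neg h₁.le,
    Real.rpow_sub hp, Real.rpow_add hp, Real.rpow_one,
    show c - a - 2 = c - (a + 2) by ring, Real.rpow_sub h₁, Real.rpow_add h₁, Real.rpow_two]
  have : 0 < p ^ a := by positivity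
  have : 0 < p ^ c := by positivity
  have : 0 < (1 - u) ^ a := by positivity
  have : 0 < (1 - u) ^ c := by positivity
  field_simp

lemma integrableOn_rpow_mul_add_rpow_neg {a c p : ℝ} (ha : -1 < a) (hc : a + 1 < c)
    (hp : 0 < p) : IntegrableOn (fun t : ℝ ↦ t ^ a * (t + p) ^ (-c)) (Ioi 0) := by
  rw [← image_mul_div_one_sub_Ioo hp, integrableOn_image_iff_integrableOn_abs_deriv_smul
    measurableSet_Ioo (fun u hu ↦ (hasDerivAt_mul_div_one_sub p hu.2.ne).hasDerivWithinAt)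
    (injOn_mul_div_one_sub hp), integrableOn_congr_fun
    (fun u hu ↦ abs_div_one_sub_sq_smul_rpow_mul_add_rpow_neg hp hu) measurableSet_Ioo]
  exact (integrableOn_rpow_mul_one_sub_rpow ha (by linarith)).const_mul _

lemma integral_rpow_mul_add_rpow_neg {a c p : ℝ} (ha : -1 < a) (hc : a + 1 < c)
    (hp : 0 < p) :
    ∫ t in Ioi (0 : ℝ), t ^ a * (t + p) ^ (-c)
      = p ^ (a + 1 - c) * (Real.Gamma (a + 1) * Real.Gamma (c - a - 1) / Real.Gamma c) := by
  rw [← image_mul_div_one_sub_Ioo hp, integral_image_eq_integral_abs_deriv_smul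
    measurableSet_Ioo (fun u hu ↦ (hasDerivAt_mul_div_one_sub p hu.2.ne).hasDerivWithinAt)
    (injOn_mul_div_one_sub hp), setIntegral_congr_fun measurableSet_Ioo
    (fun u hu ↦ abs_div_one_sub_sq_smul_rpow_mul_add_rpow_neg hp hu), integral_const_mul,
    integral_rpow_mul_one_sub_rpow ha (by linarith),
    show c - a - 2 + 1 = c - a - 1 by ring, show a + (c - a - 2) + 2 = c by ring]

lemma integral_mul_exp_eq_tsum {α : Type*} [MeasurableSpace α] {μ : Measure α}
    {f g : α → ℝ} {M : ℝ} (hf : Integrable f μ) (hg : AEStronglyMeasurable g μ)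
    (hgM : ∀ᵐ x ∂μ, |g x| ≤ M) :
    ∫ x, f x * Real.exp (g x) ∂μ = ∑' n : ℕ, ∫ x, f x * (g x ^ n / n.factorial) ∂μ := by
  have hterm_le : ∀ n : ℕ, ∀ᵐ x ∂μ, ‖g x ^ n / n.factorial‖ ≤ M ^ n / n.factorial := fun n ↦ by
    filter_upwards [hgM] with x hx
    rw [norm_div, norm_pow, Real.norm_eq_abs, RCLike.norm_natCast]
    gcongr
  have hint : ∀ n : ℕ, Integrable (fun x ↦ f x * (g x ^ n / n.factorial)) μ := fun n ↦
    hf.mul_bdd (by fun_prop) (hterm_le n)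
  have hsum : Summable fun n : ℕ ↦ ∫ x, ‖f x * (g x ^ n / n.factorial)‖ ∂μ := by
    refine .of_nonneg_of_le (fun n ↦ integral_nonneg fun x ↦ norm_nonneg _) (fun n ↦ ?_)
      ((Real.summable_pow_div_factorial M).mul_left (∫ x, ‖f x‖ ∂μ))
    rw [← integral_mul_const]
    refine integral_mono_ae (hint n).norm (hf.norm.mul_const _) ?_
    filter_upwards [hterm_le n] with x hx
    rw [norm_mul]
    gcongr
  rw [integral_tsum_of_summable_integral_norm hint hsum]
  congr 1 with x
  rw [Real.exp_eq_exp_ℝ, NormedSpace.exp_eq_tsum_div, tsum_mul_left]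

lemma abs_mul_div_add_sq_le {t p : ℝ} (ht : 0 ≤ t) (hp : 0 < p) (β : ℝ) :
    |β * t / (t + p) ^ 2| ≤ |β| / (4 * p) := by
  rw [abs_div, abs_mul, abs_of_nonneg ht, abs_of_nonneg (sq_nonneg (t + p)),
    div_le_div_iff₀ (by positivity) (by positivity)]
  nlinarith [sq_nonneg (t - p), abs_nonneg β]

lemma rpow_mul_rpow_neg_mul_pow {t p : ℝ} (ht : 0 < t) (hp : 0 < p) (μ ν β : ℝ) (n : ℕ) :
    t ^ μ * (t + p) ^ (-ν) * (-(β * t / (t + p) ^ 2)) ^ n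
      = (-β) ^ n * (t ^ (μ + n) * (t + p) ^ (-(ν + 2 * n))) := by
  have htp : 0 < t + p := by positivity
  rw [Real.rpow_add ht, Real.rpow_natCast, show -(ν + 2 * n) = -ν - (2 * n : ℕ) by push_cast; ring,
    Real.rpow_sub htp, Real.rpow_natCast, pow_mul, ← neg_div, ← neg_mul, div_pow, mul_pow]
  field_simp

lemma mul_hyp2F2Term_eq_Gamma {μ ν p : ℝ} (hμ : -1 < μ) (hν : μ + 1 < ν) (hp : 0 < p)
    (β : ℝ) (n : ℕ) :
    Real.Gamma (μ + 1) * Real.Gamma (ν - μ - 1) / (p ^ (ν - μ - 1) * Real.Gamma ν) *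
        hyp2F2Term (μ + 1) (ν - μ - 1) (ν / 2) ((ν + 1) / 2) (-β / (4 * p)) n
      = (-β) ^ n / n.factorial * (p ^ (μ + n + 1 - (ν + 2 * n)) * (Real.Gamma (μ + n + 1) *
          Real.Gamma (ν + 2 * n - (μ + n) - 1) / Real.Gamma (ν + 2 * n))) := by
  have hν₀ : 0 < ν := by linarith
  rw [show ν + 2 * n - (μ + n) - 1 = (ν - μ - 1) + n by ring,
    show μ + n + 1 = (μ + 1) + n by ring, Gamma_add_nat_eq_mul_poch (by linarith),
    Gamma_add_nat_eq_mul_poch (by linarith),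
    show ν + 2 * (n : ℝ) = ν + (2 * n : ℕ) by push_cast; ring,
    Gamma_add_nat_eq_mul_poch hν₀, poch_two_mul,
    show μ + 1 + n - (ν + (2 * n : ℕ)) = -(ν - μ - 1) - n by push_cast; ring,
    Real.rpow_sub hp (-(ν - μ - 1)), Real.rpow_neg hp.le, Real.rpow_natCast, hyp2F2Term,
    div_pow, mul_pow]
  have := Real.Gamma_pos_of_pos hν₀
  have := poch_pos (c := ν / 2) (by positivity) n
  have := poch_pos (c := (ν + 1) / 2) (by positivity) n
  have := Real.rpow_pos_of_pos hp (ν - μ - 1)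
  field_simp

lemma integral_rpow_mul_pow_div_factorial {μ ν p : ℝ} (hμ : -1 < μ) (hν : μ + 1 < ν)
    (hp : 0 < p) (β : ℝ) (n : ℕ) :
    ∫ t in Ioi (0 : ℝ), t ^ μ * (t + p) ^ (-ν) * ((-(β * t / (t + p) ^ 2)) ^ n / n.factorial)
      = Real.Gamma (μ + 1) * Real.Gamma (ν - μ - 1) / (p ^ (ν - μ - 1) * Real.Gamma ν) *
        hyp2F2Term (μ + 1) (ν - μ - 1) (ν / 2) ((ν + 1) / 2) (-β / (4 * p)) n := by
  have hn : (0 : ℝ) ≤ n := n.cast_nonneg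
  rw [mul_hyp2F2Term_eq_Gamma hμ hν hp, ← integral_rpow_mul_add_rpow_neg (by linarith)
    (by linarith) hp, ← integral_const_mul]
  refine setIntegral_congr_fun measurableSet_Ioi fun t (ht : 0 < t) ↦ ?_
  rw [← mul_div_assoc, rpow_mul_rpow_neg_mul_pow ht hp]
  ring

/-- For `μ > −1`, `ν > μ + 1`, `p > 0`:
`∫₀^∞ t^μ e^{−βt/(t+p)²} (t+p)^{−ν} dt
  = (Γ(μ+1)Γ(ν−μ−1)/(p^{ν−μ−1}Γ(ν))) ₂F₂(μ+1,ν−μ−1;ν/2,(ν+1)/2;−β/(4p))`. -/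
theorem integral_rpow_exp_ratio (μ ν p β : ℝ) (hμ : -1 < μ) (hν : μ + 1 < ν) (hp : 0 < p) :
    ∫ t in Ioi (0:ℝ), t ^ μ * Real.exp (-(β * t / (t + p) ^ 2)) * (t + p) ^ (-ν)
      = Real.Gamma (μ + 1) * Real.Gamma (ν - μ - 1) / (p ^ (ν - μ - 1) * Real.Gamma ν) *
          hyp2F2 (μ + 1) (ν - μ - 1) (ν / 2) ((ν + 1) / 2) (-β / (4 * p)) := by
  have hbound : ∀ᵐ t ∂volume.restrict (Ioi (0 : ℝ)), |-(β * t / (t + p) ^ 2)| ≤ |β| / (4 * p) :=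
    (ae_restrict_iff' measurableSet_Ioi).2 <| .of_forall fun t (ht : 0 < t) ↦
      (abs_neg _).trans_le (abs_mul_div_add_sq_le ht.le hp β)
  calc _ = ∫ t in Ioi (0 : ℝ), t ^ μ * (t + p) ^ (-ν) * Real.exp (-(β * t / (t + p) ^ 2)) := by
        simp only [mul_right_comm]
    _ = ∑' n : ℕ, ∫ t in Ioi (0 : ℝ),
          t ^ μ * (t + p) ^ (-ν) * ((-(β * t / (t + p) ^ 2)) ^ n / n.factorial) :=
        integral_mul_exp_eq_tsum (integrableOn_rpow_mul_add_rpow_neg hμ hν hp)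
          (by fun_prop : Measurable _).aestronglyMeasurable hbound
    _ = _ := by
        rw [hyp2F2_eq_tsum, ← tsum_mul_left]
        exact tsum_congr (integral_rpow_mul_pow_div_factorial hμ hν hp β)
end

section
/- Let a > 0, b > 0 and c > 0. Then ∫₀¹ x^{1/2} (1−x)^{−1/2} (a x + b(1−x))^{−2} · I₁(c √(x(1−x)) / (a x + b(1−x))) dx = (2/(a c)) · (cosh(c/(2√(a b))) − 1), where I₁ denotes the modified Bessel function of the first kind of order 1. -/
/-!
Expanding `I₁` in its power series, the integrand on `(0, 1)` becomes the series of nonnegative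
functions `Σₙ (c/2)^(2n+1) / (n! (n+1)!) · x^(n+1) (1-x)^n / (a x + b (1-x))^(2n+3)`, which may be
integrated termwise. The substitution `t = a x / (a x + b (1-x))` maps `[0, 1]` onto itself and turns
each term into a Beta integral, `∫₀¹ x^p (1-x)^q / (a x + b (1-x))^(p+q+2) dx
= p! q! / ((p+q+1)! a^(p+1) b^(q+1))`. The resulting series is `2 / (ac)` times the tail
`Σ u^(2n+2) / (2n+2)!` of the series of `cosh u` at `u = c / (2 √(ab))`.
-/

open MeasureTheory Set

noncomputable def besselI1 (z : ℝ) : ℝ :=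
  ∑' n : ℕ, (z / 2) ^ (2 * n + 1) / (n.factorial * (n + 1).factorial)

open Nat

theorem integral_pow_mul_one_sub_pow (p q : ℕ) :
    ∫ t in (0:ℝ)..1, t ^ p * (1 - t) ^ q = p ! * q ! / (p + q + 1)! := by
  have h := Complex.betaIntegral_eq_Gamma_mul_div (p + 1) (q + 1)
    (by norm_cast; omega) (by norm_cast; omega)
  rw [show (p + 1 : ℂ) + (q + 1) = ((p + q + 1 : ℕ) : ℂ) + 1 by push_cast; ring] at h
  simp only [Complex.betaIntegral, add_sub_cancel_right, Complex.cpow_natCast,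
    Complex.Gamma_nat_eq_factorial] at h
  apply Complex.ofReal_injective
  rw [← intervalIntegral.integral_ofReal]
  push_cast
  exact h

theorem hasSum_cosh_sub_one (r : ℝ) :
    HasSum (fun n : ℕ ↦ r ^ (2 * (n + 1)) / (2 * (n + 1))!) (Real.cosh r - 1) := by
  simpa using (hasSum_nat_add_iff' 1).mpr (Real.hasSum_cosh r)

theorem hasSum_integral_of_nonneg {α : Type*} [MeasurableSpace α] {μ : Measure α}
    {F : ℕ → α → ℝ} (hF_int : ∀ n, Integrable (F n) μ) (hF_nonneg : ∀ n, 0 ≤ᵐ[μ] F n)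
    (hF_sum : Summable fun n ↦ ∫ a, F n a ∂μ) :
    HasSum (fun n ↦ ∫ a, F n a ∂μ) (∫ a, ∑' n, F n a ∂μ) := by
  refine hasSum_integral_of_summable_integral_norm hF_int (hF_sum.congr fun n ↦ ?_)
  exact integral_congr_ae <| (hF_nonneg n).mono fun x hx ↦ (Real.norm_of_nonneg hx).symm

theorem rpow_mul_besselI1_eq_tsum {x y d : ℝ} (hx : 0 ≤ x) (hy : 0 < y) (hd : 0 < d) (c : ℝ) :
    x ^ ((1:ℝ)/2) * y ^ (-(1:ℝ)/2) * d ^ (-(2:ℝ)) * besselI1 (c * Real.sqrt (x * y) / d)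
      = ∑' n : ℕ, (c / 2) ^ (2 * n + 1) / (n ! * (n + 1)!) *
          (x ^ (n + 1) * y ^ n / d ^ (2 * n + 3)) := by
  obtain ⟨s, hs, rfl⟩ : ∃ s, 0 ≤ s ∧ s ^ 2 = x := ⟨_, Real.sqrt_nonneg x, Real.sq_sqrt hx⟩
  obtain ⟨t, ht, rfl⟩ : ∃ t, 0 < t ∧ t ^ 2 = y := ⟨_, Real.sqrt_pos.2 hy, Real.sq_sqrt hy.le⟩
  have hs' : (s ^ 2) ^ ((1:ℝ)/2) = s := by
    rw [← Real.sqrt_eq_rpow, Real.sqrt_sq hs]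
  have ht' : (t ^ 2) ^ (-(1:ℝ)/2) = t⁻¹ := by
    rw [neg_div, Real.rpow_neg (sq_nonneg t), ← Real.sqrt_eq_rpow, Real.sqrt_sq ht.le]
  have hd' : d ^ (-(2:ℝ)) = (d ^ 2)⁻¹ := by
    rw [Real.rpow_neg hd.le, Real.rpow_two]
  have hst : Real.sqrt (s ^ 2 * t ^ 2) = s * t := by
    rw [← mul_pow, Real.sqrt_sq (mul_nonneg hs ht.le)]
  rw [hs', ht', hd', hst, besselI1, ← tsum_mul_left]
  refine tsum_congr fun n ↦ ?_
  simp only [div_pow, mul_pow]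
  field_simp
  ring

section MulAddMulOneSub

variable {a b : ℝ}

theorem mul_add_mul_one_sub_pos (ha : 0 < a) (hb : 0 < b) {x : ℝ} (hx : x ∈ Icc (0:ℝ) 1) :
    0 < a * x + b * (1 - x) := by
  nlinarith [mul_nonneg ha.le hx.1, mul_nonneg hb.le (sub_nonneg.2 hx.2), mul_pos ha hb]

theorem integral_pow_mul_one_sub_pow_div_mul_add_mul_one_sub_pow (ha : 0 < a) (hb : 0 < b)
    (p q : ℕ) :
    ∫ x in (0:ℝ)..1, x ^ p * (1 - x) ^ q / (a * x + b * (1 - x)) ^ (p + q + 2)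
      = p ! * q ! / ((p + q + 1)! * (a ^ (p + 1) * b ^ (q + 1))) := by
  have hD : ∀ x ∈ uIcc (0:ℝ) 1, 0 < a * x + b * (1 - x) := fun x hx ↦
    mul_add_mul_one_sub_pos ha hb (by rwa [uIcc_of_le zero_le_one] at hx)
  set m : ℝ → ℝ := fun x ↦ a * x / (a * x + b * (1 - x))
  set m' : ℝ → ℝ := fun x ↦ a * b / (a * x + b * (1 - x)) ^ 2
  set g : ℝ → ℝ := fun t ↦ t ^ p * (1 - t) ^ q / (a ^ (p + 1) * b ^ (q + 1))
  have hm : ∀ x ∈ uIcc (0:ℝ) 1, HasDerivAt m (m' x) x := by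
    intro x hx
    have hD' : HasDerivAt (fun x ↦ a * x + b * (1 - x)) (a - b) x :=
      (((hasDerivAt_id x).const_mul a).add
        (((hasDerivAt_const x 1).sub (hasDerivAt_id x)).const_mul b)).congr_deriv (by ring)
    refine (((hasDerivAt_id' x).const_mul a).div hD' (hD x hx).ne').congr_deriv ?_
    simp only [m']
    ring
  have hm' : ContinuousOn m' (uIcc 0 1) :=
    continuousOn_const.div (by fun_prop) fun x hx ↦ pow_ne_zero _ (hD x hx).ne'
  have hsubst := intervalIntegral.integral_comp_mul_deriv hm hm' (by fun_prop : Continuous g)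
  have hm0 : m 0 = 0 := by simp [m]
  have hm1 : m 1 = 1 := by simp [m, ha.ne']
  rw [hm0, hm1, intervalIntegral.integral_div, integral_pow_mul_one_sub_pow, div_div] at hsubst
  rw [← hsubst]
  refine intervalIntegral.integral_congr fun x hx ↦ ?_
  have hDx := (hD x hx).ne'
  have h1m : 1 - m x = b * (1 - x) / (a * x + b * (1 - x)) := by
    simp only [m]
    field_simp
    ring
  simp only [Function.comp, g, h1m]
  simp only [m, m', div_pow, mul_pow]
  field_simp
  ring

theorem integral_Ioo_besselI1_series_term (ha : 0 < a) (hb : 0 < b) {c : ℝ} (hc : c ≠ 0)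
    (n : ℕ) :
    ∫ x in Ioo (0:ℝ) 1, (c / 2) ^ (2 * n + 1) / (n ! * (n + 1)!) *
        (x ^ (n + 1) * (1 - x) ^ n / (a * x + b * (1 - x)) ^ (2 * n + 3))
      = 2 / (a * c) * ((c / (2 * Real.sqrt (a * b))) ^ (2 * (n + 1)) / (2 * (n + 1))!) := by
  rw [← integral_Ioc_eq_integral_Ioo, ← intervalIntegral.integral_of_le zero_le_one,
    intervalIntegral.integral_const_mul, show 2 * n + 3 = (n + 1) + n + 2 by ring,
    integral_pow_mul_one_sub_pow_div_mul_add_mul_one_sub_pow ha hb, div_pow c (2 * _),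
    mul_pow 2, pow_mul (Real.sqrt _), Real.sq_sqrt (mul_pos ha hb).le,
    show (n + 1) + n + 1 = 2 * (n + 1) by ring, div_pow]
  field_simp
  ring

end MulAddMulOneSub

/-- For `a,b,c > 0`:
`∫₀¹ x^{1/2}(1−x)^{−1/2}(ax+b(1−x))^{−2} I₁(c√(x(1−x))/(ax+b(1−x))) dx
  = (2/(ac))(cosh(c/(2√(ab))) − 1)`. -/
theorem feynman_besselI1_integral (a b c : ℝ) (ha : 0 < a) (hb : 0 < b) (hc : 0 < c) :
    ∫ x in Ioo (0:ℝ) 1,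
        x ^ ((1:ℝ)/2) * (1 - x) ^ (-(1:ℝ)/2) * (a * x + b * (1 - x)) ^ (-(2:ℝ)) *
          besselI1 (c * Real.sqrt (x * (1 - x)) / (a * x + b * (1 - x)))
      = 2 / (a * c) * (Real.cosh (c / (2 * Real.sqrt (a * b))) - 1) := by
  set F : ℕ → ℝ → ℝ := fun n x ↦ (c / 2) ^ (2 * n + 1) / (n ! * (n + 1)!) *
    (x ^ (n + 1) * (1 - x) ^ n / (a * x + b * (1 - x)) ^ (2 * n + 3))
  have hD : ∀ x ∈ Icc (0:ℝ) 1, 0 < a * x + b * (1 - x) := fun x hx ↦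
    mul_add_mul_one_sub_pos ha hb hx
  have hF_int : ∀ n, IntegrableOn (F n) (Ioo 0 1) := fun n ↦
    (ContinuousOn.integrableOn_Icc <| continuousOn_const.mul <|
      (by fun_prop : Continuous _).continuousOn.div (by fun_prop)
        fun x hx ↦ pow_ne_zero _ (hD x hx).ne').mono_set Ioo_subset_Icc_self
  have hF_nonneg : ∀ n, 0 ≤ᵐ[volume.restrict (Ioo 0 1)] F n := fun n ↦
    ae_restrict_of_forall_mem measurableSet_Ioo fun x ⟨hx0, hx1⟩ ↦ by
      have := hD x ⟨hx0.le, hx1.le⟩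
      have := sub_pos.2 hx1
      positivity
  have hsum : HasSum (fun n ↦ ∫ x in Ioo 0 1, F n x)
      (2 / (a * c) * (Real.cosh (c / (2 * Real.sqrt (a * b))) - 1)) := by
    simpa only [F, integral_Ioo_besselI1_series_term ha hb hc.ne'] using
      (hasSum_cosh_sub_one _).mul_left (2 / (a * c))
  rw [setIntegral_congr_fun measurableSet_Ioo fun x hx ↦
    rpow_mul_besselI1_eq_tsum hx.1.le (sub_pos.2 hx.2) (hD x (Ioo_subset_Icc_self hx)) c]
  exact (hasSum_integral_of_nonneg hF_int hF_nonneg hsum.summable).unique hsum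
end
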